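/- arXiv:2105.07398 — 3 statements merged into one kernel-verified Lean document; each statement's English description precedes it below -/
import Mathlib

section
/- For all Ω > 0, P > 0 and σ_ε² ≥ 0: ∫_{σ_ε²}^{∞} ln(1 + P x) e^{−x/Ω} dx = Ω [ e^{−σ_ε²/Ω} ln(1 + σ_ε² P) + e^{1/(Ω P)} E₁( (1/Ω)(1/P + σ_ε²) ) ], where E₁(z) = ∫_z^{∞} (e^{−t}/t) dt for z > 0. -/
open Real MeasureTheory

/-!
Integrate by parts against `v = -Ω e^{-x/Ω}`: the boundary term at `σe` gives the first summand,
and since `P / (1 + P x) = 1 / (x + 1/P)`, the remaining integral of `e^{-x/Ω} / (x + 1/P)`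
becomes `e^{1/(ΩP)} E₁((σe + 1/P)/Ω)` after the shift `x ↦ x + 1/P` and the scaling
`t = x/Ω`.
-/

/-- The exponential integral `E₁(z) = ∫_z^∞ e^{-t}/t dt`. -/
noncomputable def E1 (z : ℝ) : ℝ := ∫ t in Set.Ioi z, Real.exp (-t) / t

open Set Filter Topology

theorem integral_comp_add_right_Ioi {E : Type*} [NormedAddCommGroup E] [NormedSpace ℝ E]
    (f : ℝ → E) (a c : ℝ) : ∫ x in Ioi a, f (x + c) = ∫ x in Ioi (a + c), f x := by
  have h := (measurePreserving_add_right volume c).setIntegral_preimage_emb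
    (measurableEmbedding_addRight c) f (Ioi (a + c))
  rwa [preimage_add_const_Ioi, add_sub_cancel_right] at h

theorem integral_exp_neg_mul_div_add_Ioi (a c : ℝ) {b : ℝ} (hb : 0 < b) :
    ∫ x in Ioi a, exp (-b * x) / (x + c) = exp (b * c) * E1 (b * (a + c)) := by
  have h_rescale (x : ℝ) :
      exp (-b * x) / (x + c) = b * exp (b * c) * (exp (-(b * (x + c))) / (b * (x + c))) := by
    field_simp
    rw [← exp_add]
    ring_nf
  simp_rw [h_rescale]
  rw [integral_const_mul, integral_comp_add_right_Ioi (fun y => exp (-(b * y)) / (b * y)),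
    integral_comp_mul_left_Ioi (fun t => exp (-t) / t) _ hb, E1, smul_eq_mul]
  field_simp

theorem integrableOn_mul_exp_neg_mul_Ioi {b : ℝ} (hb : 0 < b) :
    IntegrableOn (fun x => x * exp (-b * x)) (Ioi 0) := by
  simpa using integrableOn_rpow_mul_exp_neg_mul_rpow (s := 1) (p := 1) (by norm_num) one_pos hb

theorem norm_log_one_add_mul_mul_exp_neg_mul_le {P x : ℝ} (b : ℝ) (hP : 0 ≤ P)
    (hx : 0 ≤ x) :
    ‖log (1 + P * x) * exp (-b * x)‖ ≤ P * (x * exp (-b * x)) := by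
  have h_one_le : 1 ≤ 1 + P * x := le_add_of_nonneg_right (mul_nonneg hP hx)
  rw [norm_mul, norm_of_nonneg (log_nonneg h_one_le), norm_of_nonneg (exp_pos _).le, ← mul_assoc]
  gcongr
  linarith [log_le_sub_one_of_pos (one_pos.trans_le h_one_le)]

theorem integrableOn_exp_neg_mul_div_add_Ioi {a b c : ℝ} (hb : 0 < b) (hac : 0 < a + c) :
    IntegrableOn (fun x => exp (-b * x) / (x + c)) (Ioi a) := by
  refine Integrable.mono' ((exp_neg_integrableOn_Ioi a hb).const_mul (a + c)⁻¹)
    (by fun_prop : Measurable _).aestronglyMeasurable ?_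
  filter_upwards [ae_restrict_mem measurableSet_Ioi] with x hx
  have h_lt : a + c < x + c := by linarith [mem_Ioi.1 hx]
  rw [norm_div, norm_of_nonneg (exp_pos _).le, norm_of_nonneg (hac.trans h_lt).le, div_eq_inv_mul]
  gcongr

theorem integrableOn_log_one_add_mul_mul_exp_neg_mul_Ioi {P a b : ℝ} (hP : 0 ≤ P) (ha : 0 ≤ a)
    (hb : 0 < b) : IntegrableOn (fun x => log (1 + P * x) * exp (-b * x)) (Ioi a) := by
  have h_dom : IntegrableOn (fun x => P * (x * exp (-b * x))) (Ioi a) :=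
    IntegrableOn.mono_set ((integrableOn_mul_exp_neg_mul_Ioi hb).const_mul P) (Ioi_subset_Ioi ha)
  refine h_dom.mono' (by fun_prop : Measurable _).aestronglyMeasurable ?_
  filter_upwards [ae_restrict_mem measurableSet_Ioi] with x hx
  exact norm_log_one_add_mul_mul_exp_neg_mul_le b hP (ha.trans hx.le)

theorem tendsto_log_one_add_mul_mul_exp_neg_mul_atTop {P b : ℝ} (hP : 0 ≤ P) (hb : 0 < b) :
    Tendsto (fun x => log (1 + P * x) * exp (-b * x)) atTop (𝓝 0) := by
  have h := (tendsto_rpow_mul_exp_neg_mul_atTop_nhds_zero 1 b hb).const_mul P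
  simp only [rpow_one, mul_zero] at h
  refine squeeze_zero_norm' ?_ h
  filter_upwards [eventually_ge_atTop 0] with x hx
  exact norm_log_one_add_mul_mul_exp_neg_mul_le b hP hx

theorem integral_log_one_add_mul_mul_exp_neg_mul_Ioi {P a b : ℝ} (hP : 0 < P) (ha : 0 ≤ a)
    (hb : 0 < b) :
    ∫ x in Ioi a, log (1 + P * x) * exp (-b * x)
      = b⁻¹ * (exp (-b * a) * log (1 + P * a) + exp (b / P) * E1 (b * (a + P⁻¹))) := by
  have h_pos : ∀ x, a ≤ x → 0 < 1 + P * x := fun x hx => by nlinarith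
  have hu : ∀ x ∈ Ioi a, HasDerivAt (fun x => log (1 + P * x)) (P / (1 + P * x)) x :=
    fun x hx => by
      simpa using (((hasDerivAt_id x).const_mul P).const_add 1).log (h_pos x hx.le).ne'
  have hv : ∀ x ∈ Ioi a, HasDerivAt (fun x => -b⁻¹ * exp (-b * x)) (exp (-b * x)) x :=
    fun x _ => (((hasDerivAt_id' x).const_mul (-b)).exp.const_mul (-b⁻¹)).congr_deriv
      (by field_simp)
  have h_u'v (x : ℝ) :
      P / (1 + P * x) * (-b⁻¹ * exp (-b * x)) = -b⁻¹ * (exp (-b * x) / (x + P⁻¹)) := by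
    rw [show 1 + P * x = P * (x + P⁻¹) by field_simp; ring]
    field_simp
  have h_int_u'v : IntegrableOn (fun x => P / (1 + P * x) * (-b⁻¹ * exp (-b * x))) (Ioi a) := by
    simp_rw [h_u'v]
    exact (integrableOn_exp_neg_mul_div_add_Ioi hb (by positivity)).const_mul _
  have h_left : Tendsto (fun x => log (1 + P * x) * (-b⁻¹ * exp (-b * x))) (𝓝[>] a)
      (𝓝 (log (1 + P * a) * (-b⁻¹ * exp (-b * a)))) :=
    ((ContinuousAt.log (f := fun x => 1 + P * x) (by fun_prop) (h_pos a le_rfl).ne').mul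
      (by fun_prop)).tendsto.mono_left nhdsWithin_le_nhds
  have h_right : Tendsto (fun x => log (1 + P * x) * (-b⁻¹ * exp (-b * x))) atTop (𝓝 0) := by
    simpa [mul_left_comm] using
      (tendsto_log_one_add_mul_mul_exp_neg_mul_atTop hP.le hb).const_mul (-b⁻¹)
  rw [integral_Ioi_mul_deriv_eq_deriv_mul hu hv
    (integrableOn_log_one_add_mul_mul_exp_neg_mul_Ioi hP.le ha hb) h_int_u'v h_left h_right]
  simp_rw [h_u'v]
  rw [integral_const_mul, integral_exp_neg_mul_div_add_Ioi a _ hb, div_eq_mul_inv]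
  ring

/-- closed form of `∫_{σ_ε²}^∞ ln(1 + P x) e^{-x/Ω} dx` (the
integral `Ω·𝕁₁(Ω)` of Eq. (9) of the paper). -/
theorem integral_log_mul_exp_Ioi (Ω P σe : ℝ) (hΩ : 0 < Ω) (hP : 0 < P) (hσ : 0 ≤ σe) :
    ∫ x in Set.Ioi σe, Real.log (1 + P * x) * Real.exp (-x / Ω)
      = Ω * (Real.exp (-σe / Ω) * Real.log (1 + σe * P)
          + Real.exp (1 / (Ω * P)) * E1 (1 / Ω * (1 / P + σe))) := by
  have h_exponent (x : ℝ) : -x / Ω = -Ω⁻¹ * x := by ring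
  simp_rw [h_exponent]
  rw [integral_log_one_add_mul_mul_exp_neg_mul_Ioi hP hσ (inv_pos.2 hΩ), inv_inv]
  ring_nf
end

section
/- For all B > 0, c > 0 with B ≠ c, d ≥ 0 and Θ > 0: ∫_{Θ}^{∞} B e^{−(B−c)y} E₁(c y + d) dy = (B/(B−c)) [ e^{−(B−c)Θ} E₁(cΘ + d) − e^{d(B−c)/c} E₁(BΘ + B d/c) ], where E₁(z) = ∫_z^{∞} (e^{−t}/t) dt for z > 0. -/
open Real MeasureTheory

/-!
The substitution `y ↦ y + d/c` turns `E₁(cy + d)` into `E₁(cy)` and reduces the identity to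
the case `d = 0`. There, for `a, b > 0`, the function `e^{-(b-a)y} E₁(ay) - E₁(by)` is an
antiderivative of `-(b-a) e^{-(b-a)y} E₁(ay)` that vanishes at infinity, since the two
`E₁'` terms cancel. The bound `E₁(z) ≤ e^{-z}/z` supplies both integrability and the limit.
-/

open Set Filter Topology

lemma integrableOn_exp_neg_div_self_Ioi {a : ℝ} (ha : 0 < a) :
    IntegrableOn (fun t => exp (-t) / t) (Ioi a) := by
  refine ((integrableOn_exp_neg_Ioi a).div_const a).mono' ?_ ?_
  · exact (by fun_prop : Measurable fun t : ℝ => exp (-t) / t).aestronglyMeasurable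
  · filter_upwards [ae_restrict_mem measurableSet_Ioi] with t (ht : a < t)
    rw [Real.norm_of_nonneg (by have := ha.trans ht; positivity)]
    gcongr

lemma E1_nonneg {z : ℝ} (hz : 0 < z) : 0 ≤ E1 z :=
  setIntegral_nonneg measurableSet_Ioi fun t ht => by
    have : 0 < t := hz.trans ht
    positivity

lemma E1_le_exp_neg_div {z : ℝ} (hz : 0 < z) : E1 z ≤ exp (-z) / z :=
  calc E1 z ≤ ∫ t in Ioi z, exp (-t) / z :=
        setIntegral_mono_on (integrableOn_exp_neg_div_self_Ioi hz)
          ((integrableOn_exp_neg_Ioi z).div_const z) measurableSet_Ioi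
          fun t (ht : z < t) => by gcongr
    _ = exp (-z) / z := by rw [integral_div, integral_exp_neg_Ioi]

lemma hasDerivAt_E1 {z : ℝ} (hz : 0 < z) : HasDerivAt E1 (-(exp (-z) / z)) z := by
  have hz2 : 0 < z / 2 := half_pos hz
  have hE1 : (fun u => E1 (z / 2) - ∫ t in z / 2..u, exp (-t) / t) =ᶠ[𝓝 z] E1 := by
    filter_upwards [Ioi_mem_nhds hz] with u (hu : 0 < u)
    rw [← intervalIntegral.integral_Ioi_sub_Ioi' (integrableOn_exp_neg_div_self_Ioi hz2)
      (integrableOn_exp_neg_div_self_Ioi hu), E1, E1, sub_sub_cancel]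
  have hint : HasDerivAt (fun u => ∫ t in z / 2..u, exp (-t) / t) (exp (-z) / z) z := by
    refine intervalIntegral.integral_hasDerivAt_right ?_ ?_ ?_
    · exact (intervalIntegrable_iff_integrableOn_Ioc_of_le (by linarith)).2 <|
        (integrableOn_exp_neg_div_self_Ioi hz2).mono_set Ioc_subset_Ioi_self
    · exact (by fun_prop : Measurable fun t : ℝ => exp (-t) / t).stronglyMeasurable
        |>.stronglyMeasurableAtFilter
    · exact (continuous_exp.comp continuous_neg).continuousAt.div continuousAt_id hz.ne'
  simpa using (hint.const_sub (E1 (z / 2))).congr_of_eventuallyEq hE1.symm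

lemma tendsto_E1_atTop : Tendsto E1 atTop (𝓝 0) :=
  tendsto_integral_Ioi_zero tendsto_id

section ExpMulE1
variable {a b : ℝ}

lemma exp_mul_E1_le (ha : 0 < a) {y : ℝ} (hy : 0 < y) :
    exp (-(b - a) * y) * E1 (a * y) ≤ exp (-(b * y)) / (a * y) :=
  calc exp (-(b - a) * y) * E1 (a * y) ≤ exp (-(b - a) * y) * (exp (-(a * y)) / (a * y)) := by
        gcongr; exact E1_le_exp_neg_div (by positivity)
    _ = exp (-(b * y)) / (a * y) := by rw [mul_div_assoc', ← exp_add]; ring_nf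

lemma exp_mul_E1_nonneg (ha : 0 < a) {y : ℝ} (hy : 0 < y) :
    0 ≤ exp (-(b - a) * y) * E1 (a * y) :=
  mul_nonneg (exp_pos _).le (E1_nonneg (by positivity))

/-- The `E₁'` terms cancel because `e^{-(b-a)y} · a e^{-ay}/(ay) = b e^{-by}/(by)`. -/
lemma hasDerivAt_exp_mul_E1_sub_E1 (ha : 0 < a) (hb : 0 < b) {y : ℝ} (hy : 0 < y) :
    HasDerivAt (fun y => exp (-(b - a) * y) * E1 (a * y) - E1 (b * y))
      (-(b - a) * (exp (-(b - a) * y) * E1 (a * y))) y := by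
  have hexp : HasDerivAt (fun y => exp (-(b - a) * y)) (exp (-(b - a) * y) * (-(b - a))) y := by
    simpa using ((hasDerivAt_id y).const_mul (-(b - a))).exp
  have hE1 : ∀ {k : ℝ}, 0 < k →
      HasDerivAt (fun y => E1 (k * y)) (-(exp (-(k * y)) / (k * y)) * k) y := fun hk =>
    (hasDerivAt_E1 (by positivity)).comp y (by simpa using (hasDerivAt_id y).const_mul _)
  refine ((hexp.mul (hE1 ha)).sub (hE1 hb)).congr_deriv ?_
  have hcancel : exp (-(b - a) * y) * (exp (-(a * y)) / (a * y) * a)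
      = exp (-(b * y)) / (b * y) * b := by
    rw [← mul_assoc, mul_div_assoc', ← exp_add]
    field_simp
    ring_nf
  linear_combination -hcancel

lemma integrableOn_exp_mul_E1 (ha : 0 < a) (hb : 0 < b) {T : ℝ} (hT : 0 < T) :
    IntegrableOn (fun y => exp (-(b - a) * y) * E1 (a * y)) (Ioi T) := by
  refine ((exp_neg_integrableOn_Ioi T hb).div_const (a * T)).mono' ?_ ?_
  · refine ContinuousOn.aestronglyMeasurable (fun y (hy : T < y) => ?_) measurableSet_Ioi
    have hay : 0 < a * y := mul_pos ha (hT.trans hy)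
    exact (by fun_prop : Continuous fun y => exp (-(b - a) * y)).continuousAt.mul
      ((hasDerivAt_E1 hay).continuousAt.comp (continuous_const_mul a).continuousAt)
      |>.continuousWithinAt
  · filter_upwards [ae_restrict_mem measurableSet_Ioi] with y (hy : T < y)
    have hy0 : 0 < y := hT.trans hy
    rw [Real.norm_of_nonneg (exp_mul_E1_nonneg ha hy0)]
    calc exp (-(b - a) * y) * E1 (a * y) ≤ exp (-(b * y)) / (a * y) := exp_mul_E1_le ha hy0
      _ ≤ exp (-b * y) / (a * T) := by rw [neg_mul]; gcongr

lemma tendsto_exp_mul_E1_sub_E1 (ha : 0 < a) (hb : 0 < b) :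
    Tendsto (fun y => exp (-(b - a) * y) * E1 (a * y) - E1 (b * y)) atTop (𝓝 0) := by
  have hbound : Tendsto (fun y => exp (-(b * y)) / (a * y)) atTop (𝓝 0) := by
    simpa [div_eq_mul_inv] using (tendsto_exp_neg_atTop_nhds_zero.comp
      (tendsto_id.const_mul_atTop hb)).mul (tendsto_id.const_mul_atTop ha).inv_tendsto_atTop
  have hfirst : Tendsto (fun y => exp (-(b - a) * y) * E1 (a * y)) atTop (𝓝 0) := by
    refine squeeze_zero' ?_ ?_ hbound <;>
      filter_upwards [eventually_gt_atTop 0] with y hy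
    exacts [exp_mul_E1_nonneg ha hy, exp_mul_E1_le ha hy]
  simpa using hfirst.sub (tendsto_E1_atTop.comp (tendsto_id.const_mul_atTop hb))

theorem mul_integral_exp_mul_E1 (ha : 0 < a) (hb : 0 < b) {T : ℝ} (hT : 0 < T) :
    (b - a) * ∫ y in Ioi T, exp (-(b - a) * y) * E1 (a * y)
      = exp (-(b - a) * T) * E1 (a * T) - E1 (b * T) := by
  have hFTC := integral_Ioi_of_hasDerivAt_of_tendsto'
    (fun y (hy : T ≤ y) => hasDerivAt_exp_mul_E1_sub_E1 ha hb (hT.trans_le hy))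
    ((integrableOn_exp_mul_E1 ha hb hT).const_mul _) (tendsto_exp_mul_E1_sub_E1 ha hb)
  rw [integral_const_mul] at hFTC
  linear_combination -hFTC

end ExpMulE1

theorem integral_Ioi_comp_add_right {E : Type*} [NormedAddCommGroup E] [NormedSpace ℝ E]
    (f : ℝ → E) (a s : ℝ) : ∫ x in Ioi a, f (x + s) = ∫ x in Ioi (a + s), f x := by
  simpa using (measurePreserving_add_right volume s).setIntegral_preimage_emb
    (measurableEmbedding_addRight s) f (Ioi (a + s))

/-- `∫_Θ^∞ B e^{-(B-c)y} E₁(cy+d) dy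
  = (B/(B-c)) [ e^{-(B-c)Θ} E₁(cΘ+d) − e^{d(B-c)/c} E₁(BΘ + Bd/c) ]`. -/
theorem integral_exp_mul_E1 (B c d Θ : ℝ) (hB : 0 < B) (hc : 0 < c) (hBc : B ≠ c)
    (hd : 0 ≤ d) (hΘ : 0 < Θ) :
    ∫ y in Set.Ioi Θ, B * Real.exp (-(B - c) * y) * E1 (c * y + d)
      = B / (B - c) * (Real.exp (-(B - c) * Θ) * E1 (c * Θ + d)
          - Real.exp (d * (B - c) / c) * E1 (B * Θ + B * d / c)) := by
  have hexp (y : ℝ) :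
      exp (-(B - c) * y) = exp (d * (B - c) / c) * exp (-(B - c) * (y + d / c)) := by
    rw [← exp_add]; congr 1; field_simp; ring
  have hcd (y : ℝ) : c * y + d = c * (y + d / c) := by rw [mul_add, mul_div_cancel₀ d hc.ne']
  have hshift (y : ℝ) : B * exp (-(B - c) * y) * E1 (c * y + d)
      = B * exp (d * (B - c) / c) * (exp (-(B - c) * (y + d / c)) * E1 (c * (y + d / c))) := by
    rw [hexp y, hcd y]; ring
  have hI := eq_div_of_mul_eq (sub_ne_zero.2 hBc)
    ((mul_comm _ _).trans (mul_integral_exp_mul_E1 hc hB (by positivity : 0 < Θ + d / c)))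
  rw [integral_congr_ae (ae_of_all _ hshift), integral_const_mul,
    integral_Ioi_comp_add_right (fun y => exp (-(B - c) * y) * E1 (c * y)), hI, hexp Θ, hcd Θ,
    show B * Θ + B * d / c = B * (Θ + d / c) by ring]
  ring
end

section
/- (Theorem 3, strong user.) Let X_n, X_f, X_e be mutually independent exponential random variables with means Ω̃_n, Ω̃_f, Ω̃_e > 0. Fix a_s ∈ (0,1), σ_ε² ≥ 0, P_max > 0, and set ĝ_s = σ_ε² + a_s·max(X_n,X_f), ĝ_e = σ_ε² + a_s·X_e. Then E[ max( log₂(1 + ĝ_s P_max) − log₂(1 + ĝ_e P_max), 0 ) ] = log₂(e)·a_s·Σ_{ℓ=1}^{3} [ Â_ℓ Ξ_ℓ 𝕁₁(a_sΞ_ℓ) − Â_ℓ 𝒞̂_e Ξ_{ℓ,e} 𝕁₁(a_sΞ_{ℓ,e}) − 𝒜̂_ℓ Ĉ_e Ξ_{ℓ,e} 𝕁₁(a_sΞ_{ℓ,e}) ]. -/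
open Finset Real MeasureTheory ProbabilityTheory

/-- `𝕁₁(Ω)` of Eq. (9) of the paper. -/
noncomputable def J1 (σe Pmax Ω : ℝ) : ℝ :=
  Real.exp (-σe / Ω) * Real.log (1 + σe * Pmax)
    + Real.exp (1 / (Ω * Pmax)) * E1 (1 / Ω * (1 / Pmax + σe))

/-- `Ξ₁ = Ω̃_n`, `Ξ₂ = Ω̃_{n,f}`, `Ξ₃ = Ω̃_f`. -/
noncomputable def Xi (Ωn Ωf : ℝ) : Fin 3 → ℝ := ![Ωn, (Ωn⁻¹ + Ωf⁻¹)⁻¹, Ωf]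

/-- `Ξ_{ℓ,e} = (Ξ_ℓ⁻¹ + Ω̃_e⁻¹)⁻¹`. -/
noncomputable def Xie (Ωn Ωf Ωe : ℝ) (l : Fin 3) : ℝ := ((Xi Ωn Ωf l)⁻¹ + Ωe⁻¹)⁻¹

/-- The signs `(-1)^{ℓ+1}` for `ℓ = 1, 2, 3`. -/
noncomputable def sgn3 : Fin 3 → ℝ := ![1, -1, 1]

/-- `Â_ℓ = ((-1)^{ℓ+1}/(a_sΞ_ℓ)) e^{σ_ε²/(a_sΞ_ℓ)}`. -/
noncomputable def Ahat (as σe Ωn Ωf : ℝ) (l : Fin 3) : ℝ :=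
  sgn3 l / (as * Xi Ωn Ωf l) * Real.exp (σe / (as * Xi Ωn Ωf l))

/-- `𝒜̂_ℓ = a_sΞ_ℓ Â_ℓ`. -/
noncomputable def AhatCal (as σe Ωn Ωf : ℝ) (l : Fin 3) : ℝ :=
  as * Xi Ωn Ωf l * Ahat as σe Ωn Ωf l

/-- `Ĉ_e = (1/(a_sΩ̃_e)) e^{σ_ε²/(a_sΩ̃_e)}`. -/
noncomputable def Chat (as σe Ωe : ℝ) : ℝ :=
  1 / (as * Ωe) * Real.exp (σe / (as * Ωe))

/-- `𝒞̂_e = a_sΩ̃_e Ĉ_e`. -/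
noncomputable def ChatCal (as σe Ωe : ℝ) : ℝ := as * Ωe * Chat as σe Ωe


/-!
With `g x = logb 2 (1 + (σ + a x) P)`, the positive part of `g (max X₀ X₁) - g X₂` is the
integral of `g'` over `(X₂, max X₀ X₁)`, so by Tonelli the secrecy rate is
`∫₀^∞ g' t · P(X₂ < t < max X₀ X₁) dt`. By independence this probability is
`F_e(t) (1 - F_n(t) F_f(t)) = ∑_ℓ (-1)^{ℓ+1} (e^{-t/Ξ_ℓ} - e^{-t/Ξ_{ℓ,e}})`, and the substitution
`s = b t + d` turns each `∫₀^∞ g' t e^{-b t} dt` into `e^d E₁(d)` with `d = (1 + σP) b / (aP)`.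
These are exactly the terms left from the closed form once the `log (1 + σP)` parts of its
`𝕁₁` values cancel in pairs.
-/

open Set
open scoped ENNReal

theorem integrableOn_and_sub_eq_setIntegral_Ioc_of_deriv_nonneg {f f' : ℝ → ℝ} {a b : ℝ}
    (hab : a ≤ b)
    (hf : ∀ x ∈ Icc a b, HasDerivAt f (f' x) x) (hf' : ∀ x ∈ Ioo a b, 0 ≤ f' x) :
    IntegrableOn f' (Ioc a b) ∧ f b - f a = ∫ t in Ioc a b, f' t := by
  have hcont : ContinuousOn f (Icc a b) := fun x hx => (hf x hx).continuousAt.continuousWithinAt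
  have hderiv : ∀ x ∈ Ioo a b, HasDerivAt f (f' x) x := fun x hx => hf x (Ioo_subset_Icc_self hx)
  have hint := intervalIntegral.integrableOn_deriv_of_nonneg hcont hderiv hf'
  refine ⟨hint, ?_⟩
  rw [← intervalIntegral.integral_of_le hab, intervalIntegral.integral_eq_sub_of_hasDerivAt_of_le
    hab hcont hderiv ((intervalIntegrable_iff_integrableOn_Ioc_of_le hab).2 hint)]

theorem ofReal_max_sub_eq_lintegral_Ioo {f f' : ℝ → ℝ}
    (hf : ∀ x, 0 ≤ x → HasDerivAt f (f' x) x) (hf' : ∀ x, 0 ≤ x → 0 ≤ f' x)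
    {a b : ℝ} (ha : 0 ≤ a) (hb : 0 ≤ b) :
    ENNReal.ofReal (max (f b - f a) 0) = ∫⁻ t in Ioo a b, ENNReal.ofReal (f' t) := by
  have key : ∀ {u v : ℝ}, 0 ≤ u → u ≤ v →
      IntegrableOn f' (Ioc u v) ∧ f v - f u = ∫ t in Ioc u v, f' t := fun hu huv =>
    integrableOn_and_sub_eq_setIntegral_Ioc_of_deriv_nonneg huv (fun x hx => hf x (hu.trans hx.1))
      (fun x hx => hf' x (hu.trans hx.1.le))
  rcases le_total a b with hab | hba
  · obtain ⟨hint, heq⟩ := key ha hab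
    have hnonneg : ∀ t ∈ Ioo a b, 0 ≤ f' t := fun t ht => hf' t (ha.trans ht.1.le)
    rw [heq, integral_Ioc_eq_integral_Ioo,
      max_eq_left (setIntegral_nonneg measurableSet_Ioo hnonneg),
      ofReal_integral_eq_lintegral_ofReal (hint.mono_set Ioo_subset_Ioc_self)
        ((ae_restrict_iff' measurableSet_Ioo).2 (Filter.Eventually.of_forall hnonneg))]
  · obtain ⟨-, heq⟩ := key hb hba
    have hmono : f b - f a ≤ 0 := by
      have : 0 ≤ ∫ t in Ioc b a, f' t :=
        setIntegral_nonneg measurableSet_Ioc fun t ht => hf' t (hb.trans ht.1.le)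
      linarith
    rw [Ioo_eq_empty (not_lt.2 hba), Measure.restrict_empty, lintegral_zero_measure,
      max_eq_right hmono, ENNReal.ofReal_zero]

section Tonelli

variable {α : Type*} [MeasurableSpace α] {μ : Measure α} {Y Z : α → ℝ}

theorem measurableSet_lt_and_lt (hY : Measurable Y) (hZ : Measurable Z) (t : ℝ) :
    MeasurableSet {ω | Y ω < t ∧ t < Z ω} :=
  (measurableSet_lt hY measurable_const).inter (measurableSet_lt measurable_const hZ)

theorem lintegral_setLIntegral_Ioo [SFinite μ] (hY : Measurable Y) (hZ : Measurable Z)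
    {g : ℝ → ℝ≥0∞} (hg : Measurable g) :
    ∫⁻ ω, (∫⁻ t in Ioo (Y ω) (Z ω), g t) ∂μ = ∫⁻ t, g t * μ {ω | Y ω < t ∧ t < Z ω} := by
  set S : Set (α × ℝ) := {p | Y p.1 < p.2 ∧ p.2 < Z p.1}
  have hS : MeasurableSet S :=
    (measurableSet_lt (hY.comp measurable_fst) measurable_snd).inter
      (measurableSet_lt measurable_snd (hZ.comp measurable_fst))
  calc ∫⁻ ω, (∫⁻ t in Ioo (Y ω) (Z ω), g t) ∂μ
      = ∫⁻ ω, (∫⁻ t, S.indicator (fun p => g p.2) (ω, t)) ∂μ := by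
        refine lintegral_congr fun ω => ?_
        rw [← lintegral_indicator measurableSet_Ioo]
        rfl
    _ = ∫⁻ t, ∫⁻ ω, S.indicator (fun p => g p.2) (ω, t) ∂μ :=
        lintegral_lintegral_swap (f := fun ω t => S.indicator (fun p => g p.2) (ω, t))
          ((hg.comp measurable_snd).indicator hS).aemeasurable
    _ = ∫⁻ t, g t * μ {ω | Y ω < t ∧ t < Z ω} := by
        refine lintegral_congr fun t => ?_
        rw [← lintegral_indicator_const (measurableSet_lt_and_lt hY hZ t)]
        rfl

theorem integral_max_sub_eq_setIntegral_mul_measureReal [IsFiniteMeasure μ]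
    (hY : Measurable Y) (hZ : Measurable Z) (hY0 : ∀ᵐ ω ∂μ, 0 ≤ Y ω) (hZ0 : ∀ᵐ ω ∂μ, 0 ≤ Z ω)
    {f f' : ℝ → ℝ} (hfm : Measurable f) (hf'm : Measurable f')
    (hf : ∀ x, 0 ≤ x → HasDerivAt f (f' x) x) (hf' : ∀ x, 0 ≤ x → 0 ≤ f' x) :
    ∫ ω, max (f (Z ω) - f (Y ω)) 0 ∂μ = ∫ t in Ioi 0, f' t * μ.real {ω | Y ω < t ∧ t < Z ω} := by
  have hnull : ∀ t ≤ 0, μ {ω | Y ω < t ∧ t < Z ω} = 0 := fun t ht =>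
    measure_mono_null (t := {ω | Y ω < 0}) (fun ω hω => hω.1.trans_le ht) (by
      simpa only [ae_iff, not_le] using hY0)
  have hmeas : Measurable fun t => μ {ω | Y ω < t ∧ t < Z ω} :=
    measurable_measure_prodMk_left ((measurableSet_lt (hY.comp measurable_snd) measurable_fst).inter
      (measurableSet_lt measurable_fst (hZ.comp measurable_snd)))
  rw [integral_eq_lintegral_of_nonneg_ae (f := fun ω => max (f (Z ω) - f (Y ω)) 0)
      (Filter.Eventually.of_forall fun ω => le_max_right _ _)
      (by fun_prop),
    integral_eq_lintegral_of_nonneg_ae ((ae_restrict_iff' measurableSet_Ioi).2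
      (Filter.Eventually.of_forall fun t ht => mul_nonneg (hf' t (le_of_lt ht)) measureReal_nonneg))
      (hf'm.mul hmeas.ennreal_toReal).aestronglyMeasurable]
  congr 1
  calc ∫⁻ ω, ENNReal.ofReal (max (f (Z ω) - f (Y ω)) 0) ∂μ
      = ∫⁻ ω, (∫⁻ t in Ioo (Y ω) (Z ω), ENNReal.ofReal (f' t)) ∂μ := by
        refine lintegral_congr_ae ?_
        filter_upwards [hY0, hZ0] with ω hYω hZω
        exact ofReal_max_sub_eq_lintegral_Ioo hf hf' hYω hZω
    _ = ∫⁻ t, ENNReal.ofReal (f' t) * μ {ω | Y ω < t ∧ t < Z ω} :=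
        lintegral_setLIntegral_Ioo hY hZ hf'm.ennreal_ofReal
    _ = ∫⁻ t in Ioi 0, ENNReal.ofReal (f' t) * μ {ω | Y ω < t ∧ t < Z ω} := by
        refine (setLIntegral_eq_of_support_subset fun t ht => ?_).symm
        by_contra h
        exact ht (by simp only [hnull t (not_lt.1 h), mul_zero])
    _ = ∫⁻ t in Ioi 0, ENNReal.ofReal (f' t * μ.real {ω | Y ω < t ∧ t < Z ω}) := by
        refine setLIntegral_congr_fun measurableSet_Ioi fun t ht => ?_
        rw [ENNReal.ofReal_mul (hf' t (le_of_lt ht)), ofReal_measureReal]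

end Tonelli

section ExponentialLaw

variable {r t : ℝ}

theorem measureReal_Iic_expMeasure (hr : 0 < r) (ht : 0 ≤ t) :
    (expMeasure r).real (Iic t) = 1 - exp (-(r * t)) := by
  have := isProbabilityMeasure_expMeasure hr
  rw [← cdf_eq_real, cdf_expMeasure_eq hr, if_pos ht]

theorem measureReal_Iio_expMeasure (hr : 0 < r) (ht : 0 ≤ t) :
    (expMeasure r).real (Iio t) = 1 - exp (-(r * t)) := by
  have := isProbabilityMeasure_expMeasure hr
  have hatom : expMeasure r {t} = 0 :=
    withDensity_absolutelyContinuous _ _ (Real.volume_singleton)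
  rw [← Iic_sdiff_right, measureReal_sdiff_null (by simp [Measure.real, hatom]),
    measureReal_Iic_expMeasure hr ht]

theorem expMeasure_Iio_zero (hr : 0 < r) : expMeasure r (Iio 0) = 0 := by
  have := isProbabilityMeasure_expMeasure hr
  refine measure_mono_null Iio_subset_Iic_self ?_
  rw [← ofReal_cdf, cdf_expMeasure_eq hr, if_pos le_rfl, mul_zero, neg_zero, exp_zero, sub_self,
    ENNReal.ofReal_zero]

variable {Ω : Type*} [MeasurableSpace Ω] {μ : Measure Ω} {X : Ω → ℝ}

theorem ae_nonneg_of_map_eq_expMeasure (hX : Measurable X) (hr : 0 < r)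
    (hlaw : μ.map X = expMeasure r) : ∀ᵐ ω ∂μ, 0 ≤ X ω := by
  simp only [ae_iff, not_le]
  change μ (X ⁻¹' Iio 0) = 0
  rw [← Measure.map_apply hX measurableSet_Iio, hlaw,
    expMeasure_Iio_zero hr]

end ExponentialLaw

theorem measureReal_lt_and_lt_max_eq {Ω : Type*} [MeasurableSpace Ω] {μ : Measure Ω}
    [IsProbabilityMeasure μ] {X : Fin 3 → Ω → ℝ} (hX : ∀ i, Measurable (X i))
    (hindep : iIndepFun X μ) (t : ℝ) :
    μ.real {ω | X 2 ω < t ∧ t < max (X 0 ω) (X 1 ω)}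
      = μ.real (X 2 ⁻¹' Iio t) * (1 - μ.real (X 0 ⁻¹' Iic t) * μ.real (X 1 ⁻¹' Iic t)) := by
  set I : Fin 3 → Set ℝ := ![Iic t, Iic t, Iio t]
  have hI : ∀ i, MeasurableSet (I i) := by
    intro i; fin_cases i
    exacts [measurableSet_Iic, measurableSet_Iic, measurableSet_Iio]
  have hevent : {ω | X 2 ω < t ∧ t < max (X 0 ω) (X 1 ω)} = X 2 ⁻¹' Iio t \ ⋂ i, X i ⁻¹' I i := by
    ext ω
    simp only [I, ← not_le, sup_le_iff, not_and, mem_ofPred_eq, Set.mem_sdiff, Set.mem_preimage,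
      Set.mem_Iio, Set.mem_Iic, mem_iInter, Fin.forall_fin_succ, Matrix.cons_val_zero,
      Matrix.cons_val_succ, Fin.succ_zero_eq_one, Matrix.cons_val_fin_one, Fin.succ_one_eq_two,
      IsEmpty.forall_iff, and_true]
    tauto
  have hprod : μ.real (⋂ i, X i ⁻¹' I i) = ∏ i, μ.real (X i ⁻¹' I i) := by
    simp only [Measure.real, hindep.meas_iInter fun i => ⟨I i, hI i, rfl⟩, ENNReal.toReal_prod]
  rw [hevent, measureReal_sdiff (s₁ := X 2 ⁻¹' Iio t) (iInter_subset _ 2)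
      (MeasurableSet.iInter fun i => hX i (hI i)), hprod, Fin.prod_univ_three]
  simp only [I, Matrix.cons_val_zero, Matrix.cons_val_one, Matrix.cons_val_two, Matrix.head_cons,
    Matrix.tail_cons]
  ring

noncomputable def expMulE1 (z : ℝ) : ℝ := exp z * E1 z

section LaplaceIntegral

variable {c k b : ℝ}

theorem integrableOn_Ioi_div_add_mul_exp (hc : 0 < c) (hk : 0 < k) (hb : 0 < b) :
    IntegrableOn (fun t => c / (k + c * t) * exp (-(b * t))) (Ioi 0) := by
  refine ((exp_neg_integrableOn_Ioi 0 hb).const_mul (c / k)).mono' ?_ ?_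
  · exact (ContinuousOn.mul (continuousOn_const.div (by fun_prop) fun t (ht : 0 < t) => by
      positivity) (by fun_prop)).aestronglyMeasurable measurableSet_Ioi
  · refine (ae_restrict_iff' measurableSet_Ioi).2
      (Filter.Eventually.of_forall fun t (ht : 0 < t) => ?_)
    rw [Real.norm_eq_abs, abs_of_nonneg (by positivity), neg_mul]
    gcongr
    linarith [mul_pos hc ht]

theorem integral_Ioi_div_add_mul_exp (hc : 0 < c) (hk : 0 < k) (hb : 0 < b) :
    ∫ t in Ioi 0, c / (k + c * t) * exp (-(b * t)) = expMulE1 (k * b / c) := by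
  set d := k * b / c with hd_def
  have hd : 0 < d := by positivity
  have hpoint : ∀ t ∈ Ioi (0 : ℝ), c / (k + c * t) * exp (-(b * t))
      = exp d * b * (fun s => exp (-s) / s) (b * t + d) := by
    intro t (ht : 0 < t)
    have : b * t + d ≠ 0 := by positivity
    rw [show -(b * t) = d + -(b * t + d) by ring, exp_add, hd_def]
    field_simp
    ring
  have hshift : ∫ u in Ioi 0, (fun s => exp (-s) / s) (u + d) = E1 d := by
    have := (measurePreserving_add_right volume d).setIntegral_preimage_emb
      (measurableEmbedding_addRight d) (fun s => exp (-s) / s) (Ioi d)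
    rwa [preimage_add_const_Ioi, sub_self] at this
  rw [setIntegral_congr_fun measurableSet_Ioi hpoint, integral_const_mul,
    integral_comp_mul_left_Ioi (fun u => (fun s => exp (-s) / s) (u + d)) 0 hb, mul_zero, hshift,
    smul_eq_mul, expMulE1]
  field_simp

theorem integral_Ioi_div_add_mul_sum_exp_sub {ι : Type*} [Fintype ι] (hc : 0 < c)
    (hk : 0 < k) {w b b' : ι → ℝ} (hb : ∀ i, 0 < b i) (hb' : ∀ i, 0 < b' i) :
    ∫ t in Ioi 0, c / (k + c * t) * ∑ i, w i * (exp (-(b i * t)) - exp (-(b' i * t)))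
      = ∑ i, w i * (expMulE1 (k * b i / c) - expMulE1 (k * b' i / c)) := by
  have hint (i : ι) := integrableOn_Ioi_div_add_mul_exp hc hk (hb i)
  have hint' (i : ι) := integrableOn_Ioi_div_add_mul_exp hc hk (hb' i)
  simp only [mul_sum, mul_left_comm _ (w _)]
  rw [integral_finsetSum _ fun i _ => by
    simpa only [mul_sub, Pi.sub_apply] using ((hint i).sub (hint' i)).const_mul (w i)]
  refine sum_congr rfl fun i _ => ?_
  rw [integral_const_mul]
  congr 1
  simp only [mul_sub]
  rw [integral_sub (hint i) (hint' i), integral_Ioi_div_add_mul_exp hc hk (hb i),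
    integral_Ioi_div_add_mul_exp hc hk (hb' i)]

end LaplaceIntegral

theorem exp_div_mul_J1 {σ P : ℝ} (hP : P ≠ 0) (Ω : ℝ) :
    exp (σ / Ω) * J1 σ P Ω = log (1 + σ * P) + expMulE1 ((1 + σ * P) * Ω⁻¹ / P) := by
  have harg : 1 / Ω * (1 / P + σ) = (1 + σ * P) * Ω⁻¹ / P := by field_simp
  rw [J1, harg, expMulE1, mul_add, ← mul_assoc, ← mul_assoc, ← exp_add, ← exp_add,
    show σ / Ω + -σ / Ω = 0 by ring, show σ / Ω + 1 / (Ω * P) = (1 + σ * P) * Ω⁻¹ / P by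
      field_simp; ring, exp_zero, one_mul]

section StrongUser

variable {Ωn Ωf Ωe : ℝ}

theorem Xi_pos (hΩn : 0 < Ωn) (hΩf : 0 < Ωf) (l : Fin 3) : 0 < Xi Ωn Ωf l := by
  fin_cases l
  exacts [hΩn, inv_pos.2 (add_pos (inv_pos.2 hΩn) (inv_pos.2 hΩf)), hΩf]

theorem inv_Xie (l : Fin 3) : (Xie Ωn Ωf Ωe l)⁻¹ = (Xi Ωn Ωf l)⁻¹ + Ωe⁻¹ := by
  rw [Xie, inv_inv]

theorem measureReal_strong_user_event {α : Type*} [MeasureSpace α]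
    [IsProbabilityMeasure (ℙ : Measure α)] {X : Fin 3 → α → ℝ} (hmeas : ∀ i, Measurable (X i))
    (hΩn : 0 < Ωn) (hΩf : 0 < Ωf) (hΩe : 0 < Ωe) (hindep : iIndepFun X ℙ)
    (hdist : ∀ i, Measure.map (X i) ℙ = expMeasure (1 / ![Ωn, Ωf, Ωe] i)) {t : ℝ} (ht : 0 ≤ t) :
    (ℙ : Measure α).real {ω | X 2 ω < t ∧ t < max (X 0 ω) (X 1 ω)}
      = ∑ l, sgn3 l * (exp (-((Xi Ωn Ωf l)⁻¹ * t)) - exp (-((Xie Ωn Ωf Ωe l)⁻¹ * t))) := by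
  rw [measureReal_lt_and_lt_max_eq hmeas hindep,
    ← map_measureReal_apply (hmeas 2) measurableSet_Iio,
    ← map_measureReal_apply (hmeas 0) measurableSet_Iic,
    ← map_measureReal_apply (hmeas 1) measurableSet_Iic, hdist, hdist, hdist,
    measureReal_Iio_expMeasure (by simpa using hΩe) ht,
    measureReal_Iic_expMeasure (by simpa using hΩn) ht,
    measureReal_Iic_expMeasure (by simpa using hΩf) ht]
  simp only [Fin.sum_univ_three, inv_Xie, Xi, sgn3, Matrix.cons_val_zero, Matrix.cons_val_one,
    Matrix.cons_val_two, Matrix.head_cons, Matrix.tail_cons, inv_inv, one_div, add_mul, neg_add,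
    exp_add]
  ring

theorem mul_esr_summand_eq {as σe Pmax : ℝ} (hΩn : 0 < Ωn) (hΩf : 0 < Ωf) (hΩe : 0 < Ωe)
    (has : 0 < as) (hPmax : 0 < Pmax) (l : Fin 3) :
    as * (Ahat as σe Ωn Ωf l * Xi Ωn Ωf l * J1 σe Pmax (as * Xi Ωn Ωf l)
        - Ahat as σe Ωn Ωf l * ChatCal as σe Ωe * Xie Ωn Ωf Ωe l * J1 σe Pmax (as * Xie Ωn Ωf Ωe l)
        - AhatCal as σe Ωn Ωf l * Chat as σe Ωe * Xie Ωn Ωf Ωe l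
            * J1 σe Pmax (as * Xie Ωn Ωf Ωe l))
      = sgn3 l * (expMulE1 ((1 + σe * Pmax) * (Xi Ωn Ωf l)⁻¹ / (as * Pmax))
          - expMulE1 ((1 + σe * Pmax) * (Xie Ωn Ωf Ωe l)⁻¹ / (as * Pmax))) := by
  have hΞ := Xi_pos hΩn hΩf l
  have hsum : Ωe + Xi Ωn Ωf l ≠ 0 := by positivity
  have hdirect :
      as * (Ahat as σe Ωn Ωf l * Xi Ωn Ωf l) = sgn3 l * exp (σe / (as * Xi Ωn Ωf l)) := by
    rw [Ahat]
    field_simp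
  have hexp : σe / (as * Xie Ωn Ωf Ωe l) = σe / (as * Xi Ωn Ωf l) + σe / (as * Ωe) := by
    rw [div_eq_mul_inv, mul_inv, inv_Xie]
    ring
  have hcross : as * (Ahat as σe Ωn Ωf l * ChatCal as σe Ωe + AhatCal as σe Ωn Ωf l * Chat as σe Ωe)
      * Xie Ωn Ωf Ωe l = sgn3 l * exp (σe / (as * Xie Ωn Ωf Ωe l)) := by
    rw [hexp, exp_add]
    simp only [AhatCal, ChatCal, Ahat, Chat, Xie]
    field_simp
  have hJ (Ω : ℝ) := exp_div_mul_J1 (σ := σe) hPmax.ne' Ω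
  calc _ = as * (Ahat as σe Ωn Ωf l * Xi Ωn Ωf l) * J1 σe Pmax (as * Xi Ωn Ωf l)
        - as * (Ahat as σe Ωn Ωf l * ChatCal as σe Ωe + AhatCal as σe Ωn Ωf l * Chat as σe Ωe)
          * Xie Ωn Ωf Ωe l * J1 σe Pmax (as * Xie Ωn Ωf Ωe l) := by ring
    _ = _ := by
      have harg (Ω : ℝ) : (1 + σe * Pmax) * (as * Ω)⁻¹ / Pmax
          = (1 + σe * Pmax) * Ω⁻¹ / (as * Pmax) := by ring
      rw [hdirect, hcross, mul_assoc, mul_assoc, hJ, hJ, harg, harg]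
      ring

end StrongUser

theorem hasDerivAt_logb_one_add_mul {a σ P x : ℝ} (hx : 1 + (σ + a * x) * P ≠ 0) :
    HasDerivAt (fun x => logb 2 (1 + (σ + a * x) * P))
      ((log 2)⁻¹ * (a * P / (1 + σ * P + a * P * x))) x := by
  refine (((((hasDerivAt_id x).const_mul a).const_add σ).mul_const P |>.const_add 1
    |>.log hx).div_const (log 2)).congr_deriv ?_
  rw [id, ← show 1 + (σ + a * x) * P = 1 + σ * P + a * P * x by ring]
  field_simp

theorem strong_user_asymptotic_esr_general
    {α : Type*} [MeasureSpace α] [IsProbabilityMeasure (ℙ : Measure α)]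
    (X : Fin 3 → α → ℝ) (hmeas : ∀ i, Measurable (X i))
    (Ωn Ωf Ωe : ℝ) (hΩn : 0 < Ωn) (hΩf : 0 < Ωf) (hΩe : 0 < Ωe)
    (hindep : iIndepFun X ℙ)
    (hdist : ∀ i, Measure.map (X i) ℙ = expMeasure (1 / ![Ωn, Ωf, Ωe] i))
    (as σe Pmax : ℝ) (has0 : 0 < as) (hσ : 0 ≤ σe) (hPmax : 0 < Pmax) :
    (∫ ω, max
        (Real.logb 2 (1 + (σe + as * max (X 0 ω) (X 1 ω)) * Pmax)
          - Real.logb 2 (1 + (σe + as * X 2 ω) * Pmax)) 0 ∂ℙ)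
      = Real.logb 2 (Real.exp 1) * as
          * ∑ l : Fin 3,
              (Ahat as σe Ωn Ωf l * Xi Ωn Ωf l * J1 σe Pmax (as * Xi Ωn Ωf l)
                - Ahat as σe Ωn Ωf l * ChatCal as σe Ωe * Xie Ωn Ωf Ωe l
                    * J1 σe Pmax (as * Xie Ωn Ωf Ωe l)
                - AhatCal as σe Ωn Ωf l * Chat as σe Ωe * Xie Ωn Ωf Ωe l
                    * J1 σe Pmax (as * Xie Ωn Ωf Ωe l)) := by
  have hk : 0 < 1 + σe * Pmax := by positivity
  have hc : 0 < as * Pmax := by positivity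
  have hrate (i : Fin 3) : 0 < 1 / ![Ωn, Ωf, Ωe] i := by
    fin_cases i <;> simpa
  have hX0 (i : Fin 3) := ae_nonneg_of_map_eq_expMeasure (hmeas i) (hrate i) (hdist i)
  refine (integral_max_sub_eq_setIntegral_mul_measureReal (hmeas 2) ((hmeas 0).max (hmeas 1))
    (hX0 2) (by filter_upwards [hX0 0] with ω hω using hω.trans (le_max_left _ _))
    ((measurable_log.comp (by fun_prop)).div_const _) (by fun_prop)
    (fun x hx => hasDerivAt_logb_one_add_mul (by positivity)) fun x hx => by positivity).trans ?_
  rw [setIntegral_congr_fun measurableSet_Ioi fun t (ht : 0 < t) => by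
      rw [measureReal_strong_user_event hmeas hΩn hΩf hΩe hindep hdist ht.le, mul_assoc],
    integral_const_mul, integral_Ioi_div_add_mul_sum_exp_sub hc hk
      (fun l => inv_pos.2 (Xi_pos hΩn hΩf l))
      (fun l => by rw [inv_Xie]; have := Xi_pos hΩn hΩf l; positivity),
    show logb 2 (exp 1) = (log 2)⁻¹ by simp [logb], mul_assoc]
  congr 1
  rw [mul_sum]
  exact sum_congr rfl fun l _ => (mul_esr_summand_eq hΩn hΩf hΩe has0 hPmax l).symm

/-- Theorem 3, strong user: asymptotic (`I_p → ∞`) ergodic secrecy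
rate of the strong NOMA user, Eq. (13) of the paper. -/
theorem strong_user_asymptotic_esr
    {α : Type*} [MeasureSpace α] [IsProbabilityMeasure (ℙ : Measure α)]
    (X : Fin 3 → α → ℝ) (hmeas : ∀ i, Measurable (X i))
    (Ωn Ωf Ωe : ℝ) (hΩn : 0 < Ωn) (hΩf : 0 < Ωf) (hΩe : 0 < Ωe)
    (hindep : iIndepFun X ℙ)
    (hdist : ∀ i, Measure.map (X i) ℙ = expMeasure (1 / ![Ωn, Ωf, Ωe] i))
    (as σe Pmax : ℝ) (has0 : 0 < as) (has1 : as < 1) (hσ : 0 ≤ σe) (hPmax : 0 < Pmax) :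
    (∫ ω, max
        (Real.logb 2 (1 + (σe + as * max (X 0 ω) (X 1 ω)) * Pmax)
          - Real.logb 2 (1 + (σe + as * X 2 ω) * Pmax)) 0 ∂ℙ)
      = Real.logb 2 (Real.exp 1) * as
          * ∑ l : Fin 3,
              (Ahat as σe Ωn Ωf l * Xi Ωn Ωf l * J1 σe Pmax (as * Xi Ωn Ωf l)
                - Ahat as σe Ωn Ωf l * ChatCal as σe Ωe * Xie Ωn Ωf Ωe l
                    * J1 σe Pmax (as * Xie Ωn Ωf Ωe l)
                - AhatCal as σe Ωn Ωf l * Chat as σe Ωe * Xie Ωn Ωf Ωe l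
                    * J1 σe Pmax (as * Xie Ωn Ωf Ωe l)) :=
  strong_user_asymptotic_esr_general X hmeas Ωn Ωf Ωe hΩn hΩf hΩe hindep hdist as σe Pmax has0 hσ
    hPmax
end
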